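/- Let G = (N, E) be an unweighted graph, let i ≥ 0 be even, and consider the graph G_i. Let S be a coalition in G_i with y_i ∉ S and {y_0, …, y_{i−1}} ⊆ S. Then y_i is pivotal for S in the matching game MG(G_i) if and only if the subgraph of G induced by S ∩ N does not admit a perfect matching. -/

import Mathlib

attribute [local instance] Classical.propDecidable

/-- `M` is a matching of the subgraph of the graph with edge set `E` induced by
the vertex set `S`. -/
def IsMatchingOn {V : Type*} (E : Finset (Sym2 V)) (S : Finset V) (M : Finset (Sym2 V)) : Prop :=
  M ⊆ E ∧ (∀ e ∈ M, ¬ e.IsDiag) ∧ (∀ e ∈ M, ∀ x ∈ e, x ∈ S) ∧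
    (∀ e ∈ M, ∀ f ∈ M, e ≠ f → ∀ x ∈ e, x ∉ f)

/-- Value of a coalition `S` in the weighted matching game on the graph with edge set `E` and
weights `w`: the maximum total weight of a matching in the induced subgraph on `S`. -/
noncomputable def matchVal {V : Type*} (E : Finset (Sym2 V)) (w : Sym2 V → ℝ)
    (S : Finset V) : ℝ :=
  sSup {x : ℝ | ∃ M : Finset (Sym2 V), IsMatchingOn E S M ∧ x = ∑ e ∈ M, w e}

/-- Value of a coalition `S` in the unweighted matching game: the maximum cardinality of a
matching in the induced subgraph on `S`. -/
noncomputable def umatchVal {V : Type*} (E : Finset (Sym2 V)) (S : Finset V) : ℕ :=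
  sSup {k : ℕ | ∃ M : Finset (Sym2 V), IsMatchingOn E S M ∧ k = M.card}

/-- The Shapley value of player `i` in the cooperative game with (finite) player set `N` and
characteristic function `v`. -/
noncomputable def shapley {V : Type*} [DecidableEq V] (N : Finset V) (v : Finset V → ℝ)
    (i : V) : ℝ :=
  (1 / (Nat.factorial N.card) : ℝ) *
    ∑ S ∈ (N.erase i).powerset,
      (Nat.factorial S.card : ℝ) * (Nat.factorial (N.card - S.card - 1) : ℝ) *
        (v (insert i S) - v S)

/-- The raw Shapley value of player `i` in the cooperative game with player set `N` and
characteristic function `v`. -/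
noncomputable def rawShapley {V : Type*} [DecidableEq V] (N : Finset V) (v : Finset V → ℝ)
    (i : V) : ℝ :=
  ∑ S ∈ (N.erase i).powerset,
    (Nat.factorial S.card : ℝ) * (Nat.factorial (N.card - S.card - 1) : ℝ) *
      (v (insert i S) - v S)

/-- The subgraph induced by `S` of the graph with edge set `E` admits a perfect matching. -/
def PerfMatchable {V : Type*} (E : Finset (Sym2 V)) (S : Finset V) : Prop :=
  ∃ M : Finset (Sym2 V), IsMatchingOn E S M ∧ ∀ x ∈ S, ∃ e ∈ M, x ∈ e

/-- Edge set of `G` viewed inside the vertex type `V ⊕ ℕ`, where `Sum.inr j` is the added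
vertex `y_j`. -/
noncomputable def leftEdges {V : Type*} (E : Finset (Sym2 V)) : Finset (Sym2 (V ⊕ ℕ)) :=
  E.image (Sym2.map Sum.inl)

/-- Edge set of the graph `G_i`: the edges of `G`, edges from `y_0` to every vertex of `G`, and
the path edges `{y_{j-1}, y_j}` for `j = 1, …, i`. -/
noncomputable def GiEdges {V : Type*} [Fintype V] (E : Finset (Sym2 V)) (i : ℕ) : Finset (Sym2 (V ⊕ ℕ)) :=
  leftEdges E ∪ Finset.univ.image (fun x : V => s(Sum.inr 0, Sum.inl x)) ∪
    (Finset.Icc 1 i).image (fun j : ℕ => s(Sum.inr (j - 1), Sum.inr j))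

/-- Vertex (player) set of the graph `G_i`: the vertices of `G` together with `y_0, …, y_i`. -/
noncomputable def GiPlayers (V : Type*) [Fintype V] (i : ℕ) : Finset (V ⊕ ℕ) :=
  Finset.univ.image Sum.inl ∪ (Finset.range (i + 1)).image Sum.inr

/-!
Write `m` for the maximum size of a matching of `G[S ∩ N]` and `i = 2r`. In a matching of `G_i`,
the edges outside `G` have both ends among the `y_j`, except at most one: the edge covering `y_0`.
So if only `y_0, …, y_{n-1}` are available there are at most `(n + 1) / 2` of them, which gives
`ν(S) ≤ m + r` and `ν(S ∪ {y_i}) ≤ m + r + 1`; the first bound is attained by a maximum matching of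
`G[S ∩ N]` together with `y_0 y_1, …, y_{i-2} y_{i-1}`. If `G[S ∩ N]` has a perfect matching then
`|S ∩ N| = 2m`, and counting covered vertices gives `2 ν(S ∪ {y_i}) ≤ 2m + i + 1`, so `y_i` is not
pivotal. Otherwise a maximum matching of `G[S ∩ N]` leaves some `x` exposed, and adding
`x y_0, y_1 y_2, …, y_{i-1} y_i` to it gives a matching of size `m + r + 1`.
-/

open Finset

namespace IsMatchingOn

variable {V : Type*} {E : Finset (Sym2 V)} {S : Finset V} {M : Finset (Sym2 V)}

theorem mono {E' : Finset (Sym2 V)} {S' : Finset V} (h : IsMatchingOn E S M) (hE : E ⊆ E')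
    (hS : S ⊆ S') : IsMatchingOn E' S' M :=
  ⟨h.1.trans hE, h.2.1, fun e he x hx => hS (h.2.2.1 e he x hx), h.2.2.2⟩

theorem subset {M' : Finset (Sym2 V)} (h : IsMatchingOn E S M) (hM : M' ⊆ M) :
    IsMatchingOn E S M' :=
  ⟨hM.trans h.1, fun e he => h.2.1 e (hM he), fun e he => h.2.2.1 e (hM he),
    fun e he f hf => h.2.2.2 e (hM he) f (hM hf)⟩

theorem eq_of_mem_of_mem {e f : Sym2 V} {x : V} (h : IsMatchingOn E S M) (he : e ∈ M)
    (hf : f ∈ M) (hxe : x ∈ e) (hxf : x ∈ f) : e = f := by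
  by_contra hne
  exact h.2.2.2 e he f hf hne x hxe hxf

theorem bddAbove_card (E : Finset (Sym2 V)) (S : Finset V) :
    BddAbove {k : ℕ | ∃ M, IsMatchingOn E S M ∧ k = M.card} :=
  ⟨E.card, by rintro k ⟨M, hM, rfl⟩; exact card_le_card hM.1⟩

theorem card_le_umatchVal (h : IsMatchingOn E S M) : M.card ≤ umatchVal E S :=
  le_csSup (bddAbove_card E S) ⟨M, h, rfl⟩

variable [DecidableEq V]

theorem union {M₁ M₂ : Finset (Sym2 V)} (h₁ : IsMatchingOn E S M₁) (h₂ : IsMatchingOn E S M₂)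
    (hd : ∀ e ∈ M₁, ∀ f ∈ M₂, ∀ x ∈ e, x ∉ f) : IsMatchingOn E S (M₁ ∪ M₂) := by
  refine ⟨union_subset h₁.1 h₂.1, ?_, ?_, ?_⟩
  · intro e he
    rcases mem_union.1 he with he | he
    exacts [h₁.2.1 e he, h₂.2.1 e he]
  · intro e he
    rcases mem_union.1 he with he | he
    exacts [h₁.2.2.1 e he, h₂.2.2.1 e he]
  · intro e he f hf hne x hxe hxf
    rcases mem_union.1 he with he | he <;> rcases mem_union.1 hf with hf | hf
    exacts [h₁.2.2.2 e he f hf hne x hxe hxf, hd e he f hf x hxe hxf,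
      hd f hf e he x hxf hxe, h₂.2.2.2 e he f hf hne x hxe hxf]

theorem card_biUnion_toFinset (h : IsMatchingOn E S M) :
    (M.biUnion Sym2.toFinset).card = 2 * M.card := by
  rw [card_biUnion, sum_congr rfl fun e he => Sym2.card_toFinset_of_not_isDiag e (h.2.1 e he),
    sum_const, smul_eq_mul, mul_comm]
  intro e he f hf hne
  exact disjoint_left.2 fun x hxe hxf =>
    h.2.2.2 e he f hf hne x (Sym2.mem_toFinset.1 hxe) (Sym2.mem_toFinset.1 hxf)

end IsMatchingOn

theorem disjoint_of_forall_notMem {V : Type*} {M₁ M₂ : Finset (Sym2 V)}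
    (hd : ∀ e ∈ M₁, ∀ f ∈ M₂, ∀ x ∈ e, x ∉ f) : Disjoint M₁ M₂ := by
  refine disjoint_left.2 fun e he₁ he₂ => ?_
  induction e using Sym2.inductionOn with
  | hf a b => exact hd _ he₁ _ he₂ a (Sym2.mem_mk_left a b) (Sym2.mem_mk_left a b)

theorem exists_isMatchingOn_card_eq_umatchVal {V : Type*} (E : Finset (Sym2 V)) (S : Finset V) :
    ∃ M, IsMatchingOn E S M ∧ M.card = umatchVal E S := by
  obtain ⟨M, hM, hcard⟩ := Nat.sSup_mem (s := {k : ℕ | ∃ M, IsMatchingOn E S M ∧ k = M.card})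
    ⟨0, ∅, ⟨empty_subset _, by simp, by simp, by simp⟩, rfl⟩ (IsMatchingOn.bddAbove_card E S)
  exact ⟨M, hM, hcard.symm⟩

theorem PerfMatchable.card_le_two_mul_umatchVal {V : Type*} [DecidableEq V] {E : Finset (Sym2 V)}
    {S : Finset V} (h : PerfMatchable E S) : S.card ≤ 2 * umatchVal E S := by
  obtain ⟨M, hM, hcover⟩ := h
  have hS : S ⊆ M.biUnion Sym2.toFinset := fun x hx => by
    obtain ⟨e, he, hxe⟩ := hcover x hx
    exact mem_biUnion.2 ⟨e, he, Sym2.mem_toFinset.2 hxe⟩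
  calc S.card ≤ (M.biUnion Sym2.toFinset).card := card_le_card hS
    _ = 2 * M.card := hM.card_biUnion_toFinset
    _ ≤ 2 * umatchVal E S := Nat.mul_le_mul_left 2 hM.card_le_umatchVal

section Gi

variable {V : Type*} {E : Finset (Sym2 V)} {i : ℕ}

theorem isLeft_of_mem_leftEdges {e : Sym2 (V ⊕ ℕ)} {x : V ⊕ ℕ} (he : e ∈ leftEdges E)
    (hx : x ∈ e) : x.isLeft := by
  obtain ⟨e', -, rfl⟩ := mem_image.1 he
  obtain ⟨y, -, rfl⟩ := Sym2.mem_map.1 hx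
  rfl

theorem IsMatchingOn.filter_mem_leftEdges {E' : Finset (Sym2 (V ⊕ ℕ))} {S : Finset (V ⊕ ℕ)}
    {M : Finset (Sym2 (V ⊕ ℕ))} (hM : IsMatchingOn E' S M) :
    IsMatchingOn (leftEdges E) (S.filter (fun x => x.isLeft)) (M.filter (· ∈ leftEdges E)) := by
  have hsub := hM.subset (filter_subset (· ∈ leftEdges E) M)
  refine ⟨fun e he => (mem_filter.1 he).2, hsub.2.1, fun e he x hx => ?_, hsub.2.2.2⟩
  exact mem_filter.2 ⟨hsub.2.2.1 e he x hx, isLeft_of_mem_leftEdges (mem_filter.1 he).2 hx⟩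

noncomputable def pathMatching (V : Type*) (a r : ℕ) : Finset (Sym2 (V ⊕ ℕ)) :=
  (range r).image fun k => s(Sum.inr (a + 2 * k), Sum.inr (a + 2 * k + 1))

theorem exists_eq_inr_of_mem_pathMatching {a r : ℕ} {e : Sym2 (V ⊕ ℕ)} {x : V ⊕ ℕ}
    (he : e ∈ pathMatching V a r) (hx : x ∈ e) : ∃ t, x = Sum.inr t ∧ a ≤ t ∧ t < a + 2 * r := by
  obtain ⟨k, hk, rfl⟩ := mem_image.1 he
  rw [mem_range] at hk
  rcases Sym2.mem_iff.1 hx with rfl | rfl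
  exacts [⟨a + 2 * k, rfl, by omega, by omega⟩, ⟨a + 2 * k + 1, rfl, by omega, by omega⟩]

theorem card_pathMatching (a r : ℕ) : (pathMatching V a r).card = r := by
  rw [pathMatching, card_image_of_injective _ fun k k' h => ?_, card_range]
  rcases Sym2.eq_iff.1 h with ⟨h, -⟩ | ⟨h, -⟩ <;> simp only [Sum.inr.injEq] at h <;> omega

theorem notMem_pathMatching_of_isLeft {a r : ℕ} {e : Sym2 (V ⊕ ℕ)} {x : V ⊕ ℕ}
    (hx : x.isLeft) (he : e ∈ pathMatching V a r) : x ∉ e := fun hxe => by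
  obtain ⟨t, rfl, -⟩ := exists_eq_inr_of_mem_pathMatching he hxe
  simp at hx

variable [Fintype V]

theorem leftEdges_subset_GiEdges : leftEdges E ⊆ GiEdges E i :=
  subset_union_left.trans subset_union_left

theorem star_mem_GiEdges (x : V) : s(Sum.inr 0, Sum.inl x) ∈ GiEdges E i :=
  mem_union_left _ (mem_union_right _ (mem_image.2 ⟨x, mem_univ x, rfl⟩))

theorem path_mem_GiEdges {j : ℕ} (h₁ : 1 ≤ j) (h₂ : j ≤ i) :
    s(Sum.inr (j - 1), Sum.inr j) ∈ GiEdges E i :=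
  mem_union_right _ (mem_image.2 ⟨j, mem_Icc.2 ⟨h₁, h₂⟩, rfl⟩)

theorem mem_GiEdges_cases {e : Sym2 (V ⊕ ℕ)} (he : e ∈ GiEdges E i) :
    e ∈ leftEdges E ∨ (∃ x : V, e = s(Sum.inr 0, Sum.inl x)) ∨
      ∃ j ≤ i, e = s(Sum.inr (j - 1), Sum.inr j) := by
  simp only [GiEdges, mem_union, mem_image, mem_Icc] at he
  rcases he with (h | ⟨x, -, rfl⟩) | ⟨j, ⟨-, hj⟩, rfl⟩
  exacts [Or.inl h, Or.inr (Or.inl ⟨x, rfl⟩), Or.inr (Or.inr ⟨j, hj, rfl⟩)]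

theorem le_of_inr_mem_of_mem_GiEdges {e : Sym2 (V ⊕ ℕ)} {j : ℕ} (he : e ∈ GiEdges E i)
    (hj : Sum.inr j ∈ e) : j ≤ i := by
  rcases mem_GiEdges_cases he with h | ⟨x, rfl⟩ | ⟨k, hk, rfl⟩
  · exact absurd (isLeft_of_mem_leftEdges h hj) (by simp)
  · rcases Sym2.mem_iff.1 hj with h | h <;> simp_all
  · rcases Sym2.mem_iff.1 hj with h | h <;> simp only [Sum.inr.injEq] at h <;> omega

theorem eq_star_of_isLeft_mem {e : Sym2 (V ⊕ ℕ)} {a : V ⊕ ℕ} (he : e ∈ GiEdges E i)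
    (hnl : e ∉ leftEdges E) (ha : a ∈ e) (hal : a.isLeft) : e = s(Sum.inr 0, a) := by
  rcases mem_GiEdges_cases he with h | ⟨x, rfl⟩ | ⟨k, -, rfl⟩
  · exact absurd h hnl
  · rcases Sym2.mem_iff.1 ha with rfl | rfl
    exacts [absurd hal (by simp), rfl]
  · rcases Sym2.mem_iff.1 ha with rfl | rfl <;> exact absurd hal (by simp)

theorem IsMatchingOn.biUnion_toFinset_subset_GiEdges {S : Finset (V ⊕ ℕ)}
    {M : Finset (Sym2 (V ⊕ ℕ))} (hM : IsMatchingOn (GiEdges E i) S M) {n : ℕ}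
    (hn : ∀ j ≤ i, Sum.inr j ∈ S → j < n) :
    M.biUnion Sym2.toFinset ⊆ S.filter (fun x => x.isLeft) ∪ (range n).image Sum.inr := by
  intro x hx
  obtain ⟨e, he, hxe⟩ := mem_biUnion.1 hx
  have hxS := hM.2.2.1 e he x (Sym2.mem_toFinset.1 hxe)
  cases x with
  | inl v => exact mem_union_left _ (mem_filter.2 ⟨hxS, rfl⟩)
  | inr j =>
    have hj := le_of_inr_mem_of_mem_GiEdges (hM.1 he) (Sym2.mem_toFinset.1 hxe)
    exact mem_union_right _ (mem_image.2 ⟨j, mem_range.2 (hn j hj hxS), rfl⟩)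

theorem IsMatchingOn.two_mul_card_filter_notMem_leftEdges_le {S : Finset (V ⊕ ℕ)}
    {M : Finset (Sym2 (V ⊕ ℕ))} (hM : IsMatchingOn (GiEdges E i) S M) {n : ℕ}
    (hn : ∀ j ≤ i, Sum.inr j ∈ S → j < n) :
    2 * (M.filter (· ∉ leftEdges E)).card ≤ n + 1 := by
  set M' := M.filter (· ∉ leftEdges E)
  have hM' : IsMatchingOn (GiEdges E i) S M' := hM.subset (filter_subset _ M)
  set U := M'.biUnion Sym2.toFinset
  have hleft : (U.filter (fun x => x.isLeft)).card ≤ 1 := by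
    refine card_le_one.2 fun a ha b hb => ?_
    have hstar : ∀ c ∈ U.filter (fun x => x.isLeft), s(Sum.inr 0, c) ∈ M' := by
      intro c hc
      obtain ⟨hcU, hcl⟩ := mem_filter.1 hc
      obtain ⟨e, he, hce⟩ := mem_biUnion.1 hcU
      have hce := Sym2.mem_toFinset.1 hce
      rwa [← eq_star_of_isLeft_mem (hM'.1 he) (mem_filter.1 he).2 hce hcl]
    exact Sym2.congr_right.1 (hM'.eq_of_mem_of_mem (hstar a ha) (hstar b hb)
      (Sym2.mem_mk_left _ _) (Sym2.mem_mk_left _ _))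
  have hU : U ⊆ U.filter (fun x => x.isLeft) ∪ (range n).image Sum.inr := by
    intro x hx
    rcases mem_union.1 (hM'.biUnion_toFinset_subset_GiEdges hn hx) with h | h
    exacts [mem_union_left _ (mem_filter.2 ⟨hx, (mem_filter.1 h).2⟩), mem_union_right _ h]
  calc 2 * M'.card = U.card := hM'.card_biUnion_toFinset.symm
    _ ≤ (U.filter (fun x => x.isLeft)).card + ((range n).image Sum.inr).card :=
      (card_le_card hU).trans (card_union_le _ _)
    _ ≤ 1 + n := add_le_add hleft (card_image_le.trans (card_range n).le)
    _ = n + 1 := add_comm 1 n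

theorem two_mul_umatchVal_GiEdges_le {S : Finset (V ⊕ ℕ)} {n : ℕ}
    (hn : ∀ j ≤ i, Sum.inr j ∈ S → j < n) :
    2 * umatchVal (GiEdges E i) S ≤
      2 * umatchVal (leftEdges E) (S.filter (fun x => x.isLeft)) + n + 1 := by
  obtain ⟨M, hM, hcard⟩ := exists_isMatchingOn_card_eq_umatchVal (GiEdges E i) S
  have hsplit := card_filter_add_card_filter_not (· ∈ leftEdges E) (s := M)
  have hleft := (hM.filter_mem_leftEdges (E := E)).card_le_umatchVal
  have hrest := hM.two_mul_card_filter_notMem_leftEdges_le hn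
  omega

theorem two_mul_umatchVal_GiEdges_le_of_perfMatchable {S : Finset (V ⊕ ℕ)} {n : ℕ}
    (hn : ∀ j ≤ i, Sum.inr j ∈ S → j < n)
    (hpm : PerfMatchable (leftEdges E) (S.filter (fun x => x.isLeft))) :
    2 * umatchVal (GiEdges E i) S ≤
      2 * umatchVal (leftEdges E) (S.filter (fun x => x.isLeft)) + n := by
  obtain ⟨M, hM, hcard⟩ := exists_isMatchingOn_card_eq_umatchVal (GiEdges E i) S
  calc 2 * umatchVal (GiEdges E i) S = (M.biUnion Sym2.toFinset).card := by
        rw [← hcard, hM.card_biUnion_toFinset]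
    _ ≤ (S.filter (fun x => x.isLeft)).card + ((range n).image Sum.inr).card :=
      (card_le_card (hM.biUnion_toFinset_subset_GiEdges hn)).trans (card_union_le _ _)
    _ ≤ 2 * umatchVal (leftEdges E) (S.filter (fun x => x.isLeft)) + n :=
      add_le_add hpm.card_le_two_mul_umatchVal (card_image_le.trans (card_range n).le)

theorem isMatchingOn_pathMatching {S : Finset (V ⊕ ℕ)} {a r : ℕ} (hi : a + 2 * r ≤ i + 1)
    (hS : ∀ t, a ≤ t → t < a + 2 * r → Sum.inr t ∈ S) :
    IsMatchingOn (GiEdges E i) S (pathMatching V a r) := by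
  refine ⟨fun e he => ?_, fun e he => ?_, fun e he x hx => ?_, fun e he f hf hne x hxe hxf => ?_⟩
  · obtain ⟨k, hk, rfl⟩ := mem_image.1 he
    rw [mem_range] at hk
    simpa using path_mem_GiEdges (E := E) (j := a + 2 * k + 1) (by omega) (by omega)
  · obtain ⟨k, -, rfl⟩ := mem_image.1 he
    simp
  · obtain ⟨t, rfl, ht⟩ := exists_eq_inr_of_mem_pathMatching he hx
    exact hS t ht.1 ht.2
  · obtain ⟨k, -, rfl⟩ := mem_image.1 he
    obtain ⟨k', -, rfl⟩ := mem_image.1 hf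
    obtain rfl : k = k' := by
      rcases Sym2.mem_iff.1 hxe with rfl | rfl <;> rcases Sym2.mem_iff.1 hxf with h | h <;>
        simp only [Sum.inr.injEq] at h <;> omega
    exact hne rfl

theorem umatchVal_leftEdges_add_le {S : Finset (V ⊕ ℕ)} {r : ℕ} (hr : 2 * r ≤ i + 1)
    (hS : ∀ t < 2 * r, Sum.inr t ∈ S) :
    umatchVal (leftEdges E) (S.filter (fun x => x.isLeft)) + r ≤ umatchVal (GiEdges E i) S := by
  obtain ⟨ML, hML, hcard⟩ := exists_isMatchingOn_card_eq_umatchVal (leftEdges E)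
    (S.filter (fun x => x.isLeft))
  have hd : ∀ e ∈ ML, ∀ f ∈ pathMatching V 0 r, ∀ x ∈ e, x ∉ f := fun e he f hf x hx =>
    notMem_pathMatching_of_isLeft (isLeft_of_mem_leftEdges (hML.1 he) hx) hf
  have hP := isMatchingOn_pathMatching (E := E) (i := i) (S := S) (a := 0) (r := r) (by omega)
    fun t _ (ht : t < 0 + 2 * r) => hS t (by omega)
  have hU := ((hML.mono leftEdges_subset_GiEdges (filter_subset _ S)).union hP hd)
  rw [← hcard, ← card_pathMatching (V := V) 0 r, ← card_union_of_disjoint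
    (disjoint_of_forall_notMem hd)]
  exact hU.card_le_umatchVal

theorem umatchVal_leftEdges_add_lt_of_not_perfMatchable {S : Finset (V ⊕ ℕ)} {r : ℕ}
    (hr : 2 * r ≤ i) (hS : ∀ t ≤ 2 * r, Sum.inr t ∈ S)
    (hpm : ¬ PerfMatchable (leftEdges E) (S.filter (fun x => x.isLeft))) :
    umatchVal (leftEdges E) (S.filter (fun x => x.isLeft)) + r < umatchVal (GiEdges E i) S := by
  obtain ⟨ML, hML, hcard⟩ := exists_isMatchingOn_card_eq_umatchVal (leftEdges E)
    (S.filter (fun x => x.isLeft))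
  have hexposed : ¬ ∀ x ∈ S.filter (fun x => x.isLeft), ∃ e ∈ ML, x ∈ e :=
    fun h => hpm ⟨ML, hML, h⟩
  push Not at hexposed
  obtain ⟨x, hxT, hxML⟩ := hexposed
  obtain ⟨hxS, hxl⟩ := mem_filter.1 hxT
  obtain ⟨v, rfl⟩ : ∃ v, x = Sum.inl v := Sum.isLeft_iff.1 hxl
  set star : Finset (Sym2 (V ⊕ ℕ)) := {s(Sum.inr 0, Sum.inl v)}
  have hstar : IsMatchingOn (GiEdges E i) S star := by
    refine ⟨singleton_subset_iff.2 (star_mem_GiEdges v), by simp [star], fun e he y hy => ?_,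
      fun e he f hf hne => absurd ((mem_singleton.1 he).trans (mem_singleton.1 hf).symm) hne⟩
    rw [mem_singleton.1 he] at hy
    rcases Sym2.mem_iff.1 hy with rfl | rfl
    exacts [hS 0 (Nat.zero_le _), hxS]
  have hd₁ : ∀ e ∈ ML, ∀ f ∈ star, ∀ y ∈ e, y ∉ f := by
    intro e he f hf y hy hyf
    rw [mem_singleton.1 hf] at hyf
    rcases Sym2.mem_iff.1 hyf with rfl | rfl
    exacts [absurd (isLeft_of_mem_leftEdges (hML.1 he) hy) (by simp), hxML e he hy]
  have hd₂ : ∀ e ∈ ML ∪ star, ∀ f ∈ pathMatching V 1 r, ∀ y ∈ e, y ∉ f := by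
    intro e he f hf y hy hyf
    obtain ⟨t, rfl, ht, -⟩ := exists_eq_inr_of_mem_pathMatching hf hyf
    rcases mem_union.1 he with he | he
    · exact absurd (isLeft_of_mem_leftEdges (hML.1 he) hy) (by simp)
    · rw [mem_singleton.1 he] at hy
      rcases Sym2.mem_iff.1 hy with h | h
      exacts [absurd (Sum.inr_injective h) (by omega), Sum.inr_ne_inl h]
  have hP := isMatchingOn_pathMatching (E := E) (i := i) (S := S) (a := 1) (r := r) (by omega)
    fun t _ (ht : t < 1 + 2 * r) => hS t (by omega)
  have hU := ((hML.mono leftEdges_subset_GiEdges (filter_subset _ S)).union hstar hd₁).union hP hd₂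
  have hcardU : (ML ∪ star ∪ pathMatching V 1 r).card = ML.card + 1 + r := by
    rw [card_union_of_disjoint (disjoint_of_forall_notMem hd₂),
      card_union_of_disjoint (disjoint_of_forall_notMem hd₁), card_singleton, card_pathMatching]
  have := hU.card_le_umatchVal
  omega

end Gi

theorem pivotal_Gi_even_general {V : Type*} [Fintype V] [DecidableEq V]
    (E : Finset (Sym2 V))
    (i : ℕ) (hi : Even i)
    (S : Finset (V ⊕ ℕ))
    (hyi : Sum.inr i ∉ S) (hys : ∀ j < i, Sum.inr j ∈ S) :
    (umatchVal (GiEdges E i) (insert (Sum.inr i) S) = umatchVal (GiEdges E i) S + 1) ↔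
      ¬ PerfMatchable (leftEdges E) (S.filter (fun x => x.isLeft)) := by
  obtain ⟨r, rfl⟩ := hi
  have hT : (insert (Sum.inr (r + r)) S).filter (fun x => x.isLeft) =
      S.filter (fun x => x.isLeft) := by
    rw [filter_insert, if_neg (by simp)]
  have hbelow : ∀ j ≤ r + r, Sum.inr j ∈ S → j < r + r := fun j hj hjS =>
    lt_of_le_of_ne hj fun h => hyi (h ▸ hjS)
  have hbelow' : ∀ j ≤ r + r, Sum.inr j ∈ insert (Sum.inr (r + r)) S → j < r + r + 1 :=
    fun j hj _ => Nat.lt_succ_of_le hj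
  have hpath' : ∀ t ≤ 2 * r, Sum.inr t ∈ insert (Sum.inr (r + r)) S := fun t ht => by
    rcases (show t ≤ r + r by omega).lt_or_eq with h | rfl
    exacts [mem_insert_of_mem (hys t h), mem_insert_self _ _]
  have hupper := two_mul_umatchVal_GiEdges_le (E := E) hbelow
  have hlower := umatchVal_leftEdges_add_le (E := E) (i := r + r) (S := S) (r := r) (by omega)
    fun t (ht : t < 2 * r) => hys t (by omega)
  have hupper' := two_mul_umatchVal_GiEdges_le (E := E) hbelow'
  rw [hT] at hupper'
  constructor
  · intro hpiv hpm
    have := two_mul_umatchVal_GiEdges_le_of_perfMatchable (E := E) hbelow' (hT ▸ hpm)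
    rw [hT] at this
    omega
  · intro hpm
    have := umatchVal_leftEdges_add_lt_of_not_perfMatchable (E := E) (i := r + r) (by omega)
      hpath' (hT ▸ hpm)
    rw [hT] at this
    omega

/-- For even `i`, a coalition `S` of `G_i` containing `y_0, …, y_{i-1}` but not
`y_i` is pivotal for `y_i` iff the subgraph of `G` induced by `S ∩ N` is not perfectly
matchable. -/
theorem pivotal_Gi_even {V : Type*} [Fintype V] [DecidableEq V]
    (E : Finset (Sym2 V)) (hloop : ∀ e ∈ E, ¬ e.IsDiag)
    (i : ℕ) (hi : Even i)
    (S : Finset (V ⊕ ℕ)) (hS : S ⊆ GiPlayers V i)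
    (hyi : Sum.inr i ∉ S) (hys : ∀ j < i, Sum.inr j ∈ S) :
    (umatchVal (GiEdges E i) (insert (Sum.inr i) S) = umatchVal (GiEdges E i) S + 1) ↔
      ¬ PerfMatchable (leftEdges E) (S.filter (fun x => x.isLeft)) :=
  pivotal_Gi_even_general E i hi S hyi hys
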